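/- arXiv:1209.0184 — 5 statements merged into one kernel-verified Lean document; each statement's English description precedes it below -/
import Mathlib

section
/- Let G be a graph with N vertices and pN²/2 edges, and let n ≥ 1 be an integer. Call a vertex v of G 'bad with respect to k' if the number of sequences of k vertices in N(v) whose common neighborhood has size at most (2n)^{-n-1} p^k N is at least (1/(2n))|N(v)|^k, and call v 'good' if it is not bad with respect to any k with 1 ≤ k ≤ n. Then the sum of the degrees of the good vertices of G is at least pN²/2. -/
open Finset
open scoped Classical

/-!
Fix `1 ≤ k ≤ n` and the threshold `T = p^k N / (2n)^(n+1)`. A `k`-tuple `S` lies in `N(v)^k`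
for exactly `|N(S)|` vertices `v`, so double counting bounds the number of pairs `(v, S)` with
`S ∈ N(v)^k` and `|N(S)| ≤ T` by `N^k T`. Summed over the vertices that are bad for `k` this gives
`∑ deg^k ≤ 2n N^k T`, and the power mean inequality turns it into
`(∑ deg)^k ≤ N^(k-1) · 2n N^k T ≤ (p N² / (2n))^k`. Hence the vertices bad for some `k` carry
total degree at most `n · p N² / (2n) = p N² / 2`, out of the total `∑ deg = p N²`.
-/

theorem Finset.sum_le_sum_filter_add_sum_sum_filter {α ι M : Type*}
    [AddCommMonoid M] [PartialOrder M] [IsOrderedAddMonoid M]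
    (s : Finset α) (K : Finset ι) (good : α → Prop) (P : α → ι → Prop)
    (hgood : ∀ a ∈ s, ¬ good a → ∃ k ∈ K, P a k) {f : α → M} (hf : ∀ a ∈ s, 0 ≤ f a) :
    ∑ a ∈ s, f a ≤ ∑ a ∈ s.filter good, f a + ∑ k ∈ K, ∑ a ∈ s.filter (P · k), f a := by
  simp_rw [sum_filter]
  rw [sum_comm, ← sum_add_distrib]
  refine sum_le_sum fun a ha => ?_
  have hterm : ∀ k ∈ K, 0 ≤ if P a k then f a else 0 := fun k _ => by
    split_ifs
    exacts [hf a ha, le_rfl]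
  by_cases hga : good a
  · rw [if_pos hga]
    exact le_add_of_nonneg_right (sum_nonneg hterm)
  · obtain ⟨k, hk, hPk⟩ := hgood a ha hga
    rw [if_neg hga, zero_add]
    simpa [hPk] using single_le_sum hterm hk

theorem le_div_of_pow_le_pow_div_pow {x y a : ℝ} {m n : ℕ} (hy : 0 ≤ y) (ha : 1 ≤ a)
    (hmn : m + 1 ≤ n) (h : x ^ (m + 1) ≤ y ^ (m + 1) / a ^ n) : x ≤ y / a := by
  refine le_of_pow_le_pow_left₀ m.succ_ne_zero (by positivity) (h.trans ?_)
  rw [div_pow]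
  gcongr

namespace SimpleGraph

variable {V : Type*} [Fintype V] (G : SimpleGraph V)

noncomputable def commonNeighborFinset {k : ℕ} (S : Fin k → V) : Finset V :=
  univ.filter fun w => ∀ i, G.Adj (S i) w

noncomputable def sparseTuples (v : V) (k : ℕ) (T : ℝ) : Finset (Fin k → V) :=
  univ.filter fun S => (∀ i, S i ∈ G.neighborFinset v) ∧ (#(G.commonNeighborFinset S) : ℝ) ≤ T

theorem sum_card_sparseTuples (k : ℕ) (T : ℝ) :
    ∑ v, #(G.sparseTuples v k T) =
      ∑ S ∈ univ.filter (fun S : Fin k → V => (#(G.commonNeighborFinset S) : ℝ) ≤ T),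
        #(G.commonNeighborFinset S) := by
  set t := univ.filter (fun S : Fin k → V => (#(G.commonNeighborFinset S) : ℝ) ≤ T)
  let r : V → (Fin k → V) → Prop := fun v S => ∀ i, S i ∈ G.neighborFinset v
  calc ∑ v, #(G.sparseTuples v k T) = ∑ v, #(t.bipartiteAbove r v) := by
        congr! 2 with v
        ext S
        simp [sparseTuples, bipartiteAbove, t, r, and_comm]
    _ = ∑ S ∈ t, #(univ.bipartiteBelow r S) :=
        sum_card_bipartiteAbove_eq_sum_card_bipartiteBelow r
    _ = ∑ S ∈ t, #(G.commonNeighborFinset S) := by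
        congr! 2 with S
        ext w
        simp [commonNeighborFinset, bipartiteBelow, r, adj_comm]

theorem sum_card_sparseTuples_le (k : ℕ) {T : ℝ} (hT : 0 ≤ T) :
    ∑ v, (#(G.sparseTuples v k T) : ℝ) ≤ Fintype.card V ^ k * T := by
  rw [← Nat.cast_sum, sum_card_sparseTuples, Nat.cast_sum]
  calc _ ≤ ∑ S ∈ univ.filter (fun S : Fin k → V => (#(G.commonNeighborFinset S) : ℝ) ≤ T), T :=
        sum_le_sum fun S hS => (mem_filter.1 hS).2
    _ ≤ ∑ _S : Fin k → V, T := sum_le_sum_of_subset_of_nonneg (subset_univ _) fun _ _ _ => hT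
    _ = Fintype.card V ^ k * T := by simp

theorem mul_sum_degree_pow_le {k : ℕ} {c T : ℝ} (hc : 0 ≤ c) (hT : 0 ≤ T) (B : Finset V)
    (hB : ∀ v ∈ B, c * (G.degree v : ℝ) ^ (k + 1) ≤ #(G.sparseTuples v (k + 1) T)) :
    c * (∑ v ∈ B, (G.degree v : ℝ)) ^ (k + 1) ≤
      Fintype.card V ^ k * (Fintype.card V ^ (k + 1) * T) := by
  have hB_card : (#B : ℝ) ≤ Fintype.card V := by exact_mod_cast card_le_univ B
  calc c * (∑ v ∈ B, (G.degree v : ℝ)) ^ (k + 1)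
      ≤ c * ((#B : ℝ) ^ k * ∑ v ∈ B, (G.degree v : ℝ) ^ (k + 1)) := by
        gcongr
        exact pow_sum_le_card_mul_sum_pow (fun v _ => by positivity) k
    _ ≤ Fintype.card V ^ k * ∑ v ∈ B, c * (G.degree v : ℝ) ^ (k + 1) := by
        rw [← mul_sum, mul_left_comm]
        gcongr
    _ ≤ Fintype.card V ^ k * ∑ v, (#(G.sparseTuples v (k + 1) T) : ℝ) := by
        gcongr
        exact (sum_le_sum hB).trans
          (sum_le_sum_of_subset_of_nonneg (subset_univ B) fun _ _ _ => by positivity)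
    _ ≤ Fintype.card V ^ k * (Fintype.card V ^ (k + 1) * T) := by
        gcongr
        exact G.sum_card_sparseTuples_le (k + 1) hT

theorem sum_degree_le_of_card_sparseTuples_ge {m n : ℕ} {p : ℝ} (hp : 0 ≤ p) (hmn : m + 1 ≤ n)
    (B : Finset V) (hB : ∀ v ∈ B, 1 / (2 * (n : ℝ)) * (G.degree v : ℝ) ^ (m + 1) ≤
      #(G.sparseTuples v (m + 1) (p ^ (m + 1) * Fintype.card V / (2 * n) ^ (n + 1)))) :
    ∑ v ∈ B, (G.degree v : ℝ) ≤ p * Fintype.card V ^ 2 / (2 * n) := by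
  have h2n : (1 : ℝ) ≤ 2 * n := by
    have : (1 : ℝ) ≤ n := by exact_mod_cast (m.succ_pos.trans_le hmn)
    linarith
  refine le_div_of_pow_le_pow_div_pow (by positivity) h2n hmn ?_
  have h := G.mul_sum_degree_pow_le (by positivity) (by positivity) B hB
  rw [one_div_mul_eq_div, div_le_iff₀ (by positivity)] at h
  refine h.trans_eq ?_
  field_simp
  ring

end SimpleGraph

/-- dependent random choice: the sum of degrees of good vertices
is at least `p N^2 / 2`. -/
theorem stmt0 {V : Type*} [Fintype V] (G : SimpleGraph V)
    (N n : ℕ) (p : ℝ) (hN : Fintype.card V = N) (hn : 1 ≤ n)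
    (he : (G.edgeFinset.card : ℝ) = p * N ^ 2 / 2)
    (bad : V → ℕ → Prop)
    (hbad : ∀ v k, bad v k ↔
      (1 / (2 * (n : ℝ))) * (G.degree v : ℝ) ^ k ≤
        ((Finset.univ.filter (fun S : Fin k → V =>
          (∀ i, S i ∈ G.neighborFinset v) ∧
          (((Finset.univ.filter (fun w => ∀ i, G.Adj (S i) w)).card : ℝ) ≤
            p ^ k * N / (2 * (n : ℝ)) ^ (n + 1)))).card : ℝ)) :
    p * N ^ 2 / 2 ≤
      ∑ v ∈ Finset.univ.filter (fun v => ∀ k, 1 ≤ k → k ≤ n → ¬ bad v k),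
        (G.degree v : ℝ) := by
  subst hN
  have hdeg : ∑ v, (G.degree v : ℝ) = p * Fintype.card V ^ 2 := by
    rw [← Nat.cast_sum, G.sum_degrees_eq_twice_card_edges]
    push_cast
    rw [he]
    ring
  rcases (Fintype.card V).eq_zero_or_pos with hV | hV
  · simpa [hV] using sum_nonneg fun v _ => by positivity
  have hp : 0 ≤ p := nonneg_of_mul_nonneg_left (hdeg ▸ sum_nonneg fun v _ => by positivity)
    (by positivity : (0 : ℝ) < Fintype.card V ^ 2)
  have hbad_le : ∀ k ∈ Icc 1 n,
      ∑ v ∈ univ.filter (bad · k), (G.degree v : ℝ) ≤ p * Fintype.card V ^ 2 / (2 * n) := by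
    intro k hk
    obtain ⟨m, rfl⟩ : ∃ m, k = m + 1 := Nat.exists_eq_add_of_le' (mem_Icc.1 hk).1
    exact G.sum_degree_le_of_card_sparseTuples_ge hp (mem_Icc.1 hk).2 _
      fun v hv => (hbad v (m + 1)).1 (mem_filter.1 hv).2
  calc p * Fintype.card V ^ 2 / 2
      = ∑ v, (G.degree v : ℝ) - ∑ _k ∈ Icc 1 n, p * Fintype.card V ^ 2 / (2 * n) := by
        rw [hdeg, sum_const, Nat.card_Icc, nsmul_eq_mul, Nat.add_sub_cancel]
        field_simp
        ring
    _ ≤ ∑ v, (G.degree v : ℝ) - ∑ k ∈ Icc 1 n, ∑ v ∈ univ.filter (bad · k), (G.degree v : ℝ) := by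
        gcongr with k hk
        exact hbad_le k hk
    _ ≤ _ := by
        refine sub_le_iff_le_add.2 (sum_le_sum_filter_add_sum_sum_filter _ _ _ _ ?_ ?_)
        · intro v _ hv
          simpa [and_assoc] using hv
        · intro v _
          positivity
end

section
/- Let H be a bipartite graph with parts V₁ and V₂ and m edges, such that some vertex u ∈ V₁ is adjacent to every vertex of V₂. Then for every graph G, t_H(G) ≥ t_{K₂}(G)^m. In other words, Sidorenko's conjecture holds for every bipartite graph having a vertex complete to the other part. -/
open Finset
open scoped Classical

/-- The number of graph homomorphisms from `H` to `G`. -/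
noncomputable def homCount {A B : Type*} [Fintype A] [Fintype B]
    (H : SimpleGraph A) (G : SimpleGraph B) : ℕ :=
  (Finset.univ.filter (fun f : A → B => ∀ a b, H.Adj a b → G.Adj (f a) (f b))).card

/-!
An entropy argument, written with averages `𝔼` over all maps `f : A → B`. Let `p` be the edge
density of `G` and `c_S(f)` the density of common neighbours of `f(S)`. Since `V1` is independent,
averaging out its coordinates gives `t_H(G) = 𝔼_f ∏_{a ∈ V1} c_{N(a)}(f)`.

Let `ρ_S` be the density of the leaves of a random star: the centre is chosen proportionally to
its degree and the leaves `f b`, `b ∈ S`, are independent uniform neighbours of the centre.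
Jensen's inequality for `log`, weighted by `ρ_{V2}`, and `N(u) = V2` give
`log t_H(G) ≥ 𝔼 ρ_{V2} log (c_{V2} / ρ_{V2}) + ∑_{a ∈ V1 \ {u}} 𝔼 ρ_{V2} log c_{N(a)}`.
Jensen again, for the centre given the leaves, and the convexity of `x log x` applied to the
degrees give `𝔼 ρ_S log (c_S / ρ_S) ≥ |S| log p`. The leaves indexed by `N(a) ⊆ V2` have law
`ρ_{N(a)}` and `𝔼 ρ log ρ ≥ 0`, so each term is at least `|N(a)| log p`: `log t_H(G) ≥ m log p`.
-/

open Real Function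
open scoped BigOperators

section LogSum

variable {ι : Type*} [Fintype ι]

theorem expect_mul_log_div_le (r F : ι → ℝ) (hr : ∀ i, 0 ≤ r i) (hF : ∀ i, 0 ≤ F i)
    (hsupp : ∀ i, r i ≠ 0 → F i ≠ 0) :
    𝔼 i, r i * log (F i / r i) ≤ (𝔼 i, r i) * log ((𝔼 i, F i) / 𝔼 i, r i) := by
  rcases (expect_nonneg fun i _ => hr i).eq_or_lt with hR | hR
  · have hr0 : ∀ i, r i = 0 := fun i =>
      congrFun ((Fintype.expect_eq_zero_iff_of_nonneg hr).1 hR.symm) i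
    simp [hr0]
  obtain ⟨i₀, -, hi₀⟩ := exists_ne_zero_of_expect_ne_zero hR.ne'
  have hM : 0 < 𝔼 i, F i := expect_pos' (fun i _ => hF i)
    ⟨i₀, mem_univ _, (hF i₀).lt_of_ne (hsupp i₀ hi₀).symm⟩
  set M := 𝔼 i, F i with hMdef
  set R := 𝔼 i, r i with hRdef
  -- termwise `log x ≤ x - 1` at `x = F i R / (r i M)`
  have hterm : ∀ i, r i * log (F i / r i) - r i * log (M / R) ≤ F i * R / M - r i := by
    intro i
    rcases (hr i).eq_or_lt with h | h
    · rw [← h]; simp only [zero_mul, sub_zero]; have := hF i; positivity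
    have hFi : 0 < F i := (hF i).lt_of_ne (hsupp i h.ne').symm
    calc r i * log (F i / r i) - r i * log (M / R)
        = r i * log (F i * R / (r i * M)) := by
          rw [← mul_sub, ← log_div (by positivity) (by positivity)]
          congr 2; field_simp
      _ ≤ r i * (F i * R / (r i * M) - 1) :=
          mul_le_mul_of_nonneg_left (log_le_sub_one_of_pos (by positivity)) h.le
      _ = F i * R / M - r i := by field_simp
  have := expect_le_expect (s := univ) fun i _ => hterm i
  rw [expect_sub_distrib, expect_sub_distrib, ← expect_mul, ← expect_div, ← expect_mul,
    ← hMdef, ← hRdef, mul_div_cancel_left₀ _ hM.ne', sub_self, sub_nonpos] at this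
  exact this

theorem expect_mul_log_expect_le [Nonempty ι] (r : ι → ℝ) (hr : ∀ i, 0 ≤ r i) :
    (𝔼 i, r i) * log (𝔼 i, r i) ≤ 𝔼 i, r i * log (r i) := by
  have := expect_mul_log_div_le r 1 hr (fun _ => zero_le_one) fun _ _ => one_ne_zero
  simp only [Pi.one_apply, Fintype.expect_one, one_div, log_inv, mul_neg,
    expect_neg_distrib] at this
  linarith

theorem exp_expect_mul_log_div_le (r F : ι → ℝ) (hr : ∀ i, 0 ≤ r i) (hF : ∀ i, 0 ≤ F i)
    (hsupp : ∀ i, r i ≠ 0 → F i ≠ 0) (hr1 : 𝔼 i, r i = 1) :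
    exp (𝔼 i, r i * log (F i / r i)) ≤ 𝔼 i, F i := by
  obtain ⟨i₀, -, hi₀⟩ := exists_ne_zero_of_expect_ne_zero (hr1.symm ▸ one_ne_zero)
  have hM : 0 < 𝔼 i, F i := expect_pos' (fun i _ => hF i)
    ⟨i₀, mem_univ _, (hF i₀).lt_of_ne (hsupp i₀ hi₀).symm⟩
  have := expect_mul_log_div_le r F hr hF hsupp
  rw [hr1, one_mul, div_one] at this
  exact (exp_le_exp.2 this).trans_eq (exp_log hM)

end LogSum

theorem DependsOn.apply_update {ι α β : Type*} {Φ : (ι → α) → β} {s : Set ι}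
    (hΦ : DependsOn Φ s) {w : ι} (hw : w ∉ s) (f : ι → α) (y : α) :
    Φ (Function.update f w y) = Φ f :=
  hΦ fun _ hi => Function.update_of_ne (ne_of_mem_of_not_mem hi hw) y f

section Coordinates

variable {A B : Type*} [Fintype A] [Fintype B] [Nonempty B]

theorem expect_expect_update (w : A) (Φ : (A → B) → ℝ) :
    𝔼 f, 𝔼 y, Φ (update f w y) = 𝔼 f, Φ f := by
  have hinv : Involutive fun p : (A → B) × B => (update p.1 w p.2, p.1 w) := by
    intro p
    simp
  rw [← expect_product', univ_product_univ, Fintype.expect_bijective _ hinv.bijective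
    (fun p => Φ (update p.1 w p.2)) (fun p => Φ p.1) fun _ => rfl, ← univ_product_univ,
    expect_product (f := fun p => Φ p.1)]
  simp

theorem expect_mul_apply (w : A) {Φ : (A → B) → ℝ} {k : B → (A → B) → ℝ}
    (hΦ : DependsOn Φ {w}ᶜ) (hk : ∀ y, DependsOn (k y) {w}ᶜ) :
    𝔼 f, Φ f * k (f w) f = 𝔼 f, Φ f * 𝔼 y, k y f := by
  have hw : w ∉ ({w}ᶜ : Set A) := by simp
  rw [← expect_expect_update w]
  simp only [update_self, hΦ.apply_update hw, (hk _).apply_update hw, mul_expect]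

theorem expect_mul_prod_apply (S : Finset A) {Ψ : (A → B) → ℝ} {K : A → B → (A → B) → ℝ}
    (hΨ : DependsOn Ψ (↑S)ᶜ) (hK : ∀ a ∈ S, ∀ x, DependsOn (K a x) (↑S)ᶜ) :
    𝔼 f, Ψ f * ∏ a ∈ S, K a (f a) f = 𝔼 f, Ψ f * ∏ a ∈ S, 𝔼 x, K a x f := by
  induction S using Finset.induction_on generalizing Ψ with
  | empty => rfl
  | insert a S ha ih =>
    have hsub : (↑(insert a S) : Set A)ᶜ ⊆ (↑S)ᶜ := by simp
    have hsub' : (↑(insert a S) : Set A)ᶜ ⊆ {a}ᶜ := by simp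
    have hKS : ∀ b ∈ S, ∀ x, DependsOn (K b x) (↑S)ᶜ :=
      fun b hb x => (hK b (mem_insert_of_mem hb) x).mono hsub
    have hKa : ∀ x, DependsOn (K a x) (↑(insert a S))ᶜ := hK a (mem_insert_self a S)
    have hΨa : DependsOn (fun f => Ψ f * K a (f a) f) (↑S)ᶜ := by
      intro f g hfg
      have hfga : f a = g a := hfg a (by simpa using ha)
      dsimp only
      rw [hΨ.mono hsub hfg, hfga, (hKa (g a)).mono hsub hfg]
    have hΦ : DependsOn (fun f => Ψ f * ∏ b ∈ S, 𝔼 x, K b x f) {a}ᶜ := by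
      intro f g hfg
      have hfg' : ∀ i ∈ (↑(insert a S) : Set A)ᶜ, f i = g i :=
        fun i hi => hfg i (hsub' hi)
      dsimp only
      rw [hΨ hfg']
      congr 1
      exact prod_congr rfl fun b hb => expect_congr rfl fun x _ =>
        hK b (mem_insert_of_mem hb) x hfg'
    calc 𝔼 f, Ψ f * ∏ b ∈ insert a S, K b (f b) f
        = 𝔼 f, (Ψ f * K a (f a) f) * ∏ b ∈ S, K b (f b) f := by
          simp only [prod_insert ha, mul_assoc]
      _ = 𝔼 f, (Ψ f * ∏ b ∈ S, 𝔼 x, K b x f) * K a (f a) f := by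
          rw [ih hΨa hKS]
          exact expect_congr rfl fun f _ => by ring
      _ = 𝔼 f, Ψ f * ∏ b ∈ insert a S, 𝔼 x, K b x f := by
          rw [expect_mul_apply a hΦ fun x => (hKa x).mono hsub']
          simp only [prod_insert ha]
          exact expect_congr rfl fun f _ => by ring

end Coordinates

namespace SimpleGraph

section Definitions

variable {A B : Type*} (G : SimpleGraph B)

noncomputable def adjProd (S : Finset A) (x : B) (f : A → B) : ℝ :=
  ∏ b ∈ S, G.adjMatrix ℝ x (f b)

variable [Fintype B]

noncomputable def normDegree (x : B) : ℝ := 𝔼 y, G.adjMatrix ℝ x y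

noncomputable def edgeHomDensity : ℝ := 𝔼 x, normDegree G x

noncomputable def codegDensity (S : Finset A) (f : A → B) : ℝ := 𝔼 x, adjProd G S x f

/-- Density, with respect to the uniform measure on `B × (A → B)`, of the random star whose
centre `x` is chosen with probability proportional to its degree and whose leaves `f b`, `b ∈ S`,
are independent uniform neighbours of `x`. Only meaningful for `S.Nonempty`: for `S = ∅` the
truncated exponent `#S - 1 = 0` makes it the constant `1 / edgeHomDensity G`. -/
noncomputable def starDensity (S : Finset A) (x : B) (f : A → B) : ℝ :=
  adjProd G S x f / (edgeHomDensity G * normDegree G x ^ (#S - 1))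

noncomputable def leafDensity (S : Finset A) (f : A → B) : ℝ := 𝔼 x, starDensity G S x f

end Definitions

variable {A B : Type*} {G : SimpleGraph B}

theorem adjMatrix_nonneg (x y : B) : 0 ≤ G.adjMatrix ℝ x y := by
  rw [adjMatrix_apply]; split_ifs <;> norm_num

theorem adjProd_eq_ite (S : Finset A) (x : B) (f : A → B) :
    adjProd G S x f = if ∀ b ∈ S, G.Adj x (f b) then 1 else 0 := by
  simp only [adjProd, adjMatrix_apply, prod_boole]

theorem adjProd_nonneg (S : Finset A) (x : B) (f : A → B) : 0 ≤ adjProd G S x f := by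
  rw [adjProd_eq_ite]; split_ifs <;> norm_num

theorem dependsOn_adjProd (S : Finset A) (x : B) : DependsOn (adjProd G S x) S :=
  fun f g hfg => prod_congr rfl fun b hb => by rw [hfg b hb]

theorem prod_adjProd_neighborFinset [Fintype A] {H : SimpleGraph A} {V1 V2 : Finset A}
    (hH : H.IsBipartiteWith V1 V2) (f : A → B) :
    ∏ a ∈ V1, adjProd G (H.neighborFinset a) (f a) f =
      if ∀ a b, H.Adj a b → G.Adj (f a) (f b) then 1 else 0 := by
  by_cases h : ∀ a b, H.Adj a b → G.Adj (f a) (f b)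
  · rw [if_pos h]
    exact prod_eq_one fun a _ => by
      rw [adjProd_eq_ite, if_pos fun b hb => h a b ((H.mem_neighborFinset a b).1 hb)]
  rw [if_neg h]
  push Not at h
  obtain ⟨a, b, hab, hG⟩ := h
  have hzero : ∀ {v w}, v ∈ V1 → H.Adj v w → ¬G.Adj (f v) (f w) →
      ∏ a ∈ V1, adjProd G (H.neighborFinset a) (f a) f = 0 := fun hv hvw hn =>
    prod_eq_zero hv (by
      rw [adjProd_eq_ite, if_neg fun h' => hn (h' _ ((H.mem_neighborFinset _ _).2 hvw))])
  rcases hH.mem_of_adj hab with ⟨ha, -⟩ | ⟨-, hb⟩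
  · exact hzero ha hab hG
  · exact hzero hb hab.symm fun h' => hG h'.symm

section

variable [Fintype B]

theorem normDegree_nonneg (x : B) : 0 ≤ normDegree G x :=
  expect_nonneg fun y _ => adjMatrix_nonneg x y

theorem codegDensity_nonneg (S : Finset A) (f : A → B) : 0 ≤ codegDensity G S f :=
  expect_nonneg fun x _ => adjProd_nonneg S x f

theorem starDensity_nonneg (S : Finset A) (x : B) (f : A → B) : 0 ≤ starDensity G S x f :=
  div_nonneg (adjProd_nonneg S x f)
    (mul_nonneg (expect_nonneg fun x _ => normDegree_nonneg x)
      (pow_nonneg (normDegree_nonneg x) _))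

theorem leafDensity_nonneg (S : Finset A) (f : A → B) : 0 ≤ leafDensity G S f :=
  expect_nonneg fun x _ => starDensity_nonneg S x f

theorem dependsOn_codegDensity (S : Finset A) : DependsOn (codegDensity G S) S :=
  fun _ _ hfg => expect_congr rfl fun x _ => dependsOn_adjProd S x hfg

theorem adjProd_eq_zero_of_normDegree_eq_zero {S : Finset A} (hS : S.Nonempty) {x : B}
    (hx : normDegree G x = 0) (f : A → B) : adjProd G S x f = 0 := by
  obtain ⟨b, hb⟩ := hS
  have := congrFun ((Fintype.expect_eq_zero_iff_of_nonneg (adjMatrix_nonneg x)).1 hx) (f b)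
  exact prod_eq_zero hb this

theorem codegDensity_pos_of_leafDensity_ne_zero {S T : Finset A} (hST : S ⊆ T) {f : A → B}
    (h : leafDensity G T f ≠ 0) : 0 < codegDensity G S f := by
  obtain ⟨x, -, hx⟩ := exists_ne_zero_of_expect_ne_zero h
  have hT : adjProd G T x f ≠ 0 := fun h0 => hx (by simp [starDensity, h0])
  rw [adjProd_eq_ite] at hT
  have hS : adjProd G S x f = 1 := by
    rw [adjProd_eq_ite, if_pos fun b hb => (ite_ne_right_iff.1 hT).1 b (hST hb)]
  exact expect_pos' (fun y _ => adjProd_nonneg S y f) ⟨x, mem_univ x, hS ▸ one_pos⟩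

theorem starDensity_mul_log (S : Finset A) (x : B) (f : A → B) :
    starDensity G S x f * log (adjProd G S x f / starDensity G S x f) =
      starDensity G S x f * (log (edgeHomDensity G) + (#S - 1 : ℕ) * log (normDegree G x)) := by
  by_cases h : starDensity G S x f = 0
  · simp [h]
  have hadj : adjProd G S x f = 1 := by
    rw [starDensity, adjProd_eq_ite] at h
    rw [adjProd_eq_ite]
    split_ifs at h ⊢ <;> simp_all
  have hden : edgeHomDensity G * normDegree G x ^ (#S - 1) ≠ 0 := by
    intro h0; exact h (by simp [starDensity, h0])
  rw [starDensity, hadj, one_div_one_div, log_mul (left_ne_zero_of_mul hden)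
    (right_ne_zero_of_mul hden), log_pow]

theorem edgeHomDensity_eq :
    edgeHomDensity G = 2 * #G.edgeFinset / (Fintype.card B : ℝ) ^ 2 := by
  have hdeg : ∀ x, ∑ y, G.adjMatrix ℝ x y = G.degree x := fun x => by
    simp [adjMatrix_apply, sum_boole, ← neighborFinset_eq_filter]
  simp only [edgeHomDensity, normDegree, Fintype.expect_eq_sum_div_card, hdeg, ← sum_div]
  rw [← Nat.cast_sum, sum_degrees_eq_twice_card_edges]
  push_cast
  ring

variable [Nonempty B]

theorem edgeHomDensity_mul_log_le :
    edgeHomDensity G * log (edgeHomDensity G) ≤ 𝔼 x, normDegree G x * log (normDegree G x) :=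
  expect_mul_log_expect_le _ normDegree_nonneg

theorem codegDensity_empty (f : A → B) : codegDensity G ∅ f = 1 := by
  simp [codegDensity, adjProd]

variable [Fintype A]

theorem expect_adjProd_mul (S : Finset A) (x : B) {Ψ : (A → B) → ℝ} (hΨ : DependsOn Ψ (↑S)ᶜ) :
    𝔼 f, adjProd G S x f * Ψ f = normDegree G x ^ #S * 𝔼 f, Ψ f := by
  have := expect_mul_prod_apply S hΨ (K := fun _ y _ => G.adjMatrix ℝ x y)
    fun _ _ _ _ _ _ => rfl
  simp only [prod_const] at this
  simp only [adjProd, mul_comm _ (Ψ _), this, ← expect_mul, normDegree, mul_comm]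

theorem expect_adjProd_mul_of_subset {S T : Finset A} (hST : S ⊆ T) (x : B)
    {Ψ : (A → B) → ℝ} (hΨ : DependsOn Ψ (↑(T \ S))ᶜ) :
    𝔼 f, adjProd G T x f * Ψ f = normDegree G x ^ (#T - #S) * 𝔼 f, adjProd G S x f * Ψ f := by
  have hΦ : DependsOn (fun f => adjProd G S x f * Ψ f) (↑(T \ S))ᶜ := by
    intro f g hfg
    have hS : ∀ b ∈ (S : Set A), f b = g b := fun b hb => hfg b (by simp [hb])
    simp only [dependsOn_adjProd S x hS, hΨ hfg]
  rw [← card_sdiff_of_subset hST, ← expect_adjProd_mul _ x hΦ]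
  simp only [adjProd, ← prod_sdiff hST, mul_assoc]

theorem expect_starDensity_mul {S T : Finset A} (hST : S ⊆ T) (hS : S.Nonempty) (x : B)
    {Ψ : (A → B) → ℝ} (hΨ : DependsOn Ψ (↑(T \ S))ᶜ) :
    𝔼 f, starDensity G T x f * Ψ f = 𝔼 f, starDensity G S x f * Ψ f := by
  simp only [starDensity, div_mul_eq_mul_div, ← expect_div]
  rw [expect_adjProd_mul_of_subset hST x hΨ]
  rcases eq_or_ne (normDegree G x) 0 with hx | hx
  · simp [adjProd_eq_zero_of_normDegree_eq_zero hS hx]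
  have hT : #T - 1 = (#T - #S) + (#S - 1) := by
    have := card_le_card hST; have := hS.card_pos; omega
  rw [hT, pow_add, mul_left_comm, mul_div_mul_left _ _ (pow_ne_zero _ hx)]

theorem expect_starDensity {S : Finset A} (hS : S.Nonempty) (x : B) :
    𝔼 f, starDensity G S x f = normDegree G x / edgeHomDensity G := by
  have := expect_adjProd_mul S x (G := G) ((dependsOn_const (1 : ℝ)).mono (Set.empty_subset _))
  simp only [mul_one, Fintype.expect_one] at this
  simp only [starDensity, ← expect_div, this]
  rcases eq_or_ne (normDegree G x) 0 with hx | hx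
  · simp [hx, hS.card_pos.ne']
  rw [← Nat.sub_add_cancel hS.card_pos, pow_succ, Nat.add_sub_cancel,
    mul_comm (edgeHomDensity G), mul_div_mul_left _ _ (pow_ne_zero _ hx)]

theorem expect_leafDensity {S : Finset A} (hS : S.Nonempty) (hp : edgeHomDensity G ≠ 0) :
    𝔼 f, leafDensity G S f = 1 := by
  simp only [leafDensity]
  rw [expect_comm]
  simp only [expect_starDensity hS, ← expect_div]
  exact div_self hp

theorem expect_leafDensity_mul {S T : Finset A} (hST : S ⊆ T) (hS : S.Nonempty)
    {Ψ : (A → B) → ℝ} (hΨ : DependsOn Ψ (↑(T \ S))ᶜ) :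
    𝔼 f, leafDensity G T f * Ψ f = 𝔼 f, leafDensity G S f * Ψ f := by
  simp only [leafDensity, expect_mul]
  rw [expect_comm univ univ fun f x => starDensity G T x f * Ψ f,
    expect_comm univ univ fun f x => starDensity G S x f * Ψ f]
  exact expect_congr rfl fun x _ => expect_starDensity_mul hST hS x hΨ

theorem card_mul_log_edgeHomDensity_le {S : Finset A} (hS : S.Nonempty)
    (hp : 0 < edgeHomDensity G) :
    #S * log (edgeHomDensity G) ≤
      𝔼 f, leafDensity G S f * log (codegDensity G S f / leafDensity G S f) := by
  set p := edgeHomDensity G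
  set k : ℝ := ((#S - 1 : ℕ) : ℝ)
  set L := 𝔼 x, normDegree G x * log (normDegree G x)
  have hjensen : ∀ f, 𝔼 x, starDensity G S x f * (log p + k * log (normDegree G x)) ≤
      leafDensity G S f * log (codegDensity G S f / leafDensity G S f) := fun f =>
    calc _ = 𝔼 x, starDensity G S x f * log (adjProd G S x f / starDensity G S x f) :=
          expect_congr rfl fun x _ => (starDensity_mul_log S x f).symm
      _ ≤ _ := expect_mul_log_div_le _ _ (fun x => starDensity_nonneg S x f)
          (fun x => adjProd_nonneg S x f) fun x h h0 => h (by simp [starDensity, h0])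
  have hcentre : 𝔼 f, 𝔼 x, starDensity G S x f * (log p + k * log (normDegree G x)) =
      log p + k / p * L := by
    rw [expect_comm]
    simp only [← expect_mul, expect_starDensity hS]
    calc _ = 𝔼 x, (log p / p * normDegree G x + k / p * (normDegree G x * log (normDegree G x))) :=
          expect_congr rfl fun x _ => by ring
      _ = log p / p * p + k / p * L := by rw [expect_add_distrib, ← mul_expect, ← mul_expect]; rfl
      _ = _ := by rw [div_mul_cancel₀ _ hp.ne']
  have hk : (#S : ℝ) = k + 1 := by
    simp only [k, Nat.cast_sub hS.card_pos, Nat.cast_one, sub_add_cancel]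
  have hk0 : 0 ≤ k / p := div_nonneg (Nat.cast_nonneg _) hp.le
  calc #S * log p = log p + k / p * (p * log p) := by rw [hk]; field_simp; ring
    _ ≤ log p + k / p * L := by gcongr; exact edgeHomDensity_mul_log_le
    _ = _ := hcentre.symm
    _ ≤ _ := expect_le_expect fun f _ => hjensen f

theorem card_mul_log_edgeHomDensity_le_expect_mul_log_codegDensity {S T : Finset A}
    (hST : S ⊆ T) (hp : 0 < edgeHomDensity G) :
    #S * log (edgeHomDensity G) ≤ 𝔼 f, leafDensity G T f * log (codegDensity G S f) := by
  rcases S.eq_empty_or_nonempty with rfl | hS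
  · simp [codegDensity_empty]
  have hΨ : DependsOn (fun f => log (codegDensity G S f)) (↑(T \ S))ᶜ :=
    fun f g hfg => by
      simp only [dependsOn_codegDensity S fun b hb => hfg b (by simp [hb])]
  rw [expect_leafDensity_mul hST hS hΨ]
  have hsplit : ∀ f, leafDensity G S f * log (codegDensity G S f) =
      leafDensity G S f * log (codegDensity G S f / leafDensity G S f) +
        leafDensity G S f * log (leafDensity G S f) := fun f => by
    by_cases h : leafDensity G S f = 0
    · simp [h]
    rw [log_div (codegDensity_pos_of_leafDensity_ne_zero subset_rfl h).ne' h]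
    ring
  have hent : 0 ≤ 𝔼 f, leafDensity G S f * log (leafDensity G S f) := by
    have := expect_mul_log_expect_le _ (leafDensity_nonneg (G := G) S)
    rwa [expect_leafDensity hS hp.ne', log_one, mul_zero] at this
  simp only [hsplit, expect_add_distrib]
  linarith [card_mul_log_edgeHomDensity_le hS hp]

theorem sum_card_mul_log_edgeHomDensity_le {ι : Type*} {I : Finset ι} {N : ι → Finset A}
    {T : Finset A} (hT : T.Nonempty) (hN : ∀ i ∈ I, N i ⊆ T) {i₀ : ι} (hi₀ : i₀ ∈ I)
    (hNi₀ : N i₀ = T) (hp : 0 < edgeHomDensity G) :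
    (∑ i ∈ I, #(N i) : ℕ) * log (edgeHomDensity G) ≤
      𝔼 f, leafDensity G T f * log ((∏ i ∈ I, codegDensity G (N i) f) / leafDensity G T f) := by
  have hsplit : ∀ f, leafDensity G T f * log ((∏ i ∈ I, codegDensity G (N i) f) /
      leafDensity G T f) = leafDensity G T f * log (codegDensity G T f / leafDensity G T f) +
        ∑ i ∈ I.erase i₀, leafDensity G T f * log (codegDensity G (N i) f) := fun f => by
    by_cases h : leafDensity G T f = 0
    · simp [h]
    have hpos : ∀ i ∈ I, 0 < codegDensity G (N i) f :=
      fun i hi => codegDensity_pos_of_leafDensity_ne_zero (hN i hi) h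
    rw [← mul_prod_erase I _ hi₀, hNi₀, mul_div_right_comm,
      log_mul (div_pos (hNi₀ ▸ hpos i₀ hi₀) ((leafDensity_nonneg T f).lt_of_ne' h)).ne'
        (prod_pos fun i hi => hpos i (mem_of_mem_erase hi)).ne',
      log_prod fun i hi => (hpos i (mem_of_mem_erase hi)).ne', mul_add, mul_sum]
  simp only [hsplit, expect_add_distrib, expect_sum_comm]
  rw [← add_sum_erase I _ hi₀, hNi₀, Nat.cast_add, Nat.cast_sum, add_mul, sum_mul]
  gcongr with i hi
  · exact card_mul_log_edgeHomDensity_le hT hp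
  · exact card_mul_log_edgeHomDensity_le_expect_mul_log_codegDensity
      (hN i (mem_of_mem_erase hi)) hp

theorem pow_edgeHomDensity_le_expect_prod_codegDensity {ι : Type*} {I : Finset ι}
    {N : ι → Finset A} {T : Finset A} (hN : ∀ i ∈ I, N i ⊆ T) {i₀ : ι} (hi₀ : i₀ ∈ I)
    (hNi₀ : N i₀ = T) :
    edgeHomDensity G ^ (∑ i ∈ I, #(N i)) ≤ 𝔼 f, ∏ i ∈ I, codegDensity G (N i) f := by
  rcases T.eq_empty_or_nonempty with rfl | hT
  · have hN : ∀ i ∈ I, N i = ∅ := fun i hi => subset_empty.1 (hN i hi)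
    have hcard : ∑ i ∈ I, #(N i) = 0 := sum_eq_zero fun i hi => by rw [hN i hi, card_empty]
    have hprod : ∀ f : A → B, ∏ i ∈ I, codegDensity G (N i) f = 1 := fun f =>
      prod_eq_one fun i hi => by rw [hN i hi, codegDensity_empty]
    simp [hcard, hprod]
  have hp0 : 0 ≤ edgeHomDensity G := expect_nonneg fun x _ => normDegree_nonneg x
  rcases hp0.eq_or_lt with hp | hp
  · have hpos : 0 < ∑ i ∈ I, #(N i) :=
      (show 0 < #(N i₀) by rw [hNi₀]; exact hT.card_pos).trans_le
        (single_le_sum (f := fun i => #(N i)) (fun _ _ => Nat.zero_le _) hi₀)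
    rw [← hp, zero_pow hpos.ne']
    exact expect_nonneg fun f _ => prod_nonneg fun i _ => codegDensity_nonneg _ f
  calc edgeHomDensity G ^ (∑ i ∈ I, #(N i))
      = exp ((∑ i ∈ I, #(N i) : ℕ) * log (edgeHomDensity G)) := by
        rw [exp_nat_mul, exp_log hp]
    _ ≤ exp (𝔼 f, leafDensity G T f *
          log ((∏ i ∈ I, codegDensity G (N i) f) / leafDensity G T f)) :=
        exp_le_exp.2 (sum_card_mul_log_edgeHomDensity_le hT hN hi₀ hNi₀ hp)
    _ ≤ _ := exp_expect_mul_log_div_le _ _ (leafDensity_nonneg T)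
        (fun f => prod_nonneg fun i _ => codegDensity_nonneg _ f)
        (fun f h => (prod_pos fun i hi =>
          codegDensity_pos_of_leafDensity_ne_zero (hN i hi) h).ne')
        (expect_leafDensity hT hp.ne')

theorem IsBipartiteWith.homCount_div_eq_expect_prod_codegDensity {H : SimpleGraph A}
    {V1 V2 : Finset A} (hH : H.IsBipartiteWith V1 V2) :
    (homCount H G : ℝ) / (Fintype.card B : ℝ) ^ Fintype.card A =
      𝔼 f, ∏ a ∈ V1, codegDensity G (H.neighborFinset a) f := by
  have hK : ∀ a ∈ V1, ∀ x, DependsOn (adjProd G (H.neighborFinset a) x) (↑V1)ᶜ :=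
    fun a ha x => (dependsOn_adjProd _ x).mono fun b hb =>
      Set.disjoint_right.1 hH.disjoint (hH.mem_of_mem_adj ha (by simpa using hb))
  have := expect_mul_prod_apply V1 ((dependsOn_const (1 : ℝ)).mono (Set.empty_subset _)) hK
  simp only [one_mul] at this
  unfold codegDensity
  rw [← this, Fintype.expect_eq_sum_div_card, Fintype.card_fun]
  simp only [prod_adjProd_neighborFinset hH, sum_boole, homCount]
  push_cast
  rfl

end

end SimpleGraph

theorem stmt7_general {A B : Type*} [Fintype A] [Fintype B] [Nonempty B]
    (H : SimpleGraph A) (V1 V2 : Finset A)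
    (hdisj : Disjoint V1 V2)
    (hbip : ∀ a b, H.Adj a b → (a ∈ V1 ∧ b ∈ V2) ∨ (a ∈ V2 ∧ b ∈ V1))
    (u : A) (hu : u ∈ V1) (hcomplete : ∀ b ∈ V2, H.Adj u b)
    (m : ℕ) (hm : H.edgeFinset.card = m)
    (G : SimpleGraph B) :
    (2 * (G.edgeFinset.card : ℝ) / (Fintype.card B : ℝ) ^ 2) ^ m ≤
      (homCount H G : ℝ) / (Fintype.card B : ℝ) ^ (Fintype.card A) := by
  have hH : H.IsBipartiteWith V1 V2 := ⟨disjoint_coe.2 hdisj, hbip⟩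
  have hN : ∀ a ∈ V1, H.neighborFinset a ⊆ V2 := fun a ha b hb =>
    hH.mem_of_mem_adj ha ((H.mem_neighborFinset a b).1 hb)
  have hNu : H.neighborFinset u = V2 :=
    (hN u hu).antisymm fun b hb => (H.mem_neighborFinset u b).2 (hcomplete b hb)
  have hm' : m = ∑ a ∈ V1, #(H.neighborFinset a) := by
    rw [← hm, ← SimpleGraph.isBipartiteWith_sum_degrees_eq_card_edges hH]
    simp only [SimpleGraph.card_neighborFinset_eq_degree]
  rw [← SimpleGraph.edgeHomDensity_eq, hH.homCount_div_eq_expect_prod_codegDensity, hm']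
  exact SimpleGraph.pow_edgeHomDensity_le_expect_prod_codegDensity hN hu hNu

/-- Theorem 1: Sidorenko's conjecture holds for every bipartite
graph `H` with a vertex complete to the other part: `t_H(G) ≥ t_{K₂}(G)^m`. -/
theorem stmt7 {A B : Type*} [Fintype A] [Fintype B] [Nonempty B]
    (H : SimpleGraph A) (V1 V2 : Finset A)
    (hdisj : Disjoint V1 V2) (hcover : V1 ∪ V2 = Finset.univ)
    (hbip : ∀ a b, H.Adj a b → (a ∈ V1 ∧ b ∈ V2) ∨ (a ∈ V2 ∧ b ∈ V1))
    (u : A) (hu : u ∈ V1) (hcomplete : ∀ b ∈ V2, H.Adj u b)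
    (m : ℕ) (hm : H.edgeFinset.card = m)
    (G : SimpleGraph B) :
    (2 * (G.edgeFinset.card : ℝ) / (Fintype.card B : ℝ) ^ 2) ^ m ≤
      (homCount H G : ℝ) / (Fintype.card B : ℝ) ^ (Fintype.card A) :=
  stmt7_general H V1 V2 hdisj hbip u hu hcomplete m hm G
end

section
/- Sidorenko's conjecture holds for complete bipartite graphs: for all positive integers s, t and every graph G, t_{K_{s,t}}(G) ≥ t_{K₂}(G)^{st}. -/
open Finset
open scoped Classical

lemma card_fun_into {B : Type*} [Fintype B] (s : ℕ) (S : Finset B) :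
    (Finset.univ.filter (fun x : Fin s → B => ∀ i, x i ∈ S)).card = S.card ^ s := by
  classical
  have h : (Finset.univ.filter (fun x : Fin s → B => ∀ i, x i ∈ S))
      = Fintype.piFinset (fun _ : Fin s => S) := by
    ext x; simp [Fintype.mem_piFinset]
  rw [h, Fintype.card_piFinset]
  simp

lemma homCount_eq {B : Type*} [Fintype B] (G : SimpleGraph B) (s t : ℕ) :
    homCount (completeBipartiteGraph (Fin s) (Fin t)) G
      = ∑ y : Fin t → B,
          ((Finset.univ.filter (fun v => ∀ j, G.Adj v (y j))).card) ^ s := by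
  classical
  have key : ∀ f : (Fin s ⊕ Fin t) → B,
      (∀ a b, (completeBipartiteGraph (Fin s) (Fin t)).Adj a b → G.Adj (f a) (f b))
        ↔ ∀ i j, G.Adj (f (Sum.inl i)) (f (Sum.inr j)) := by
    intro f
    constructor
    · intro h i j
      exact h _ _ (by simp)
    · intro h a b hab
      rcases a with a | a <;> rcases b with b | b <;> simp at hab
      · exact h a b
      · exact (h b a).symm
  have main : homCount (completeBipartiteGraph (Fin s) (Fin t)) G
      = (Finset.univ.filter (fun p : (Fin s → B) × (Fin t → B) =>
          ∀ i j, G.Adj (p.1 i) (p.2 j))).card := by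
    unfold homCount
    refine Finset.card_equiv (Equiv.sumArrowEquivProdArrow (Fin s) (Fin t) B) fun f => ?_
    simp only [Finset.mem_filter, Finset.mem_univ, true_and]
    exact (key f).trans (by simp [Equiv.sumArrowEquivProdArrow])
  rw [main, Finset.card_filter, Fintype.sum_prod_type_right]
  refine Finset.sum_congr rfl fun y _ => ?_
  have h2 : ∀ x : Fin s → B, (∀ i j, G.Adj (x i) (y j))
      ↔ ∀ i, x i ∈ Finset.univ.filter (fun v => ∀ j, G.Adj v (y j)) := by
    intro x; simp
  calc (∑ x : Fin s → B, if ∀ i j, G.Adj (x i) (y j) then 1 else 0)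
      = ∑ x : Fin s → B,
          if ∀ i, x i ∈ Finset.univ.filter (fun v => ∀ j, G.Adj v (y j)) then 1 else 0 :=
        Finset.sum_congr rfl fun x _ => if_congr (h2 x) rfl rfl
    _ = (Finset.univ.filter (fun x : Fin s → B =>
          ∀ i, x i ∈ Finset.univ.filter (fun v => ∀ j, G.Adj v (y j)))).card :=
        (Finset.card_filter _ _).symm
    _ = _ := card_fun_into s _

lemma sum_card_eq {B : Type*} [Fintype B] (G : SimpleGraph B) (t : ℕ) :
    ∑ y : Fin t → B, ((Finset.univ.filter (fun v => ∀ j, G.Adj v (y j))).card)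
      = ∑ v : B, (G.degree v) ^ t := by
  classical
  simp_rw [Finset.card_filter]
  rw [Finset.sum_comm]
  refine Finset.sum_congr rfl fun v _ => ?_
  rw [← Finset.card_filter]
  have h2 : (Finset.univ.filter (fun y : Fin t → B => ∀ j, G.Adj v (y j)))
      = (Finset.univ.filter (fun y : Fin t → B => ∀ j, y j ∈ G.neighborFinset v)) := by
    ext y; simp
  rw [h2, card_fun_into, SimpleGraph.card_neighborFinset_eq_degree]

lemma sidor_arith (a b : ℕ) (n D S H : ℝ) (hn : 0 < n) (hD : 0 ≤ D) (hS : 0 ≤ S)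
    (hH : 0 ≤ H)
    (h1 : D ^ (b + 1) / n ^ b ≤ S)
    (h2 : S ^ (a + 1) / (n ^ (b + 1)) ^ a ≤ H) :
    (D / n ^ 2) ^ ((a + 1) * (b + 1)) ≤ H / n ^ ((a + 1) + (b + 1)) := by
  rw [div_le_iff₀ (by positivity)] at h1 h2
  rw [div_pow, div_le_div_iff₀ (by positivity) (by positivity)]
  calc D ^ ((a + 1) * (b + 1)) * n ^ ((a + 1) + (b + 1))
      = (D ^ (b + 1)) ^ (a + 1) * n ^ ((a + 1) + (b + 1)) := by
        rw [← pow_mul, Nat.mul_comm]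
    _ ≤ (S * n ^ b) ^ (a + 1) * n ^ ((a + 1) + (b + 1)) := by
        apply mul_le_mul_of_nonneg_right _ (by positivity)
        exact pow_le_pow_left₀ (by positivity) h1 _
    _ = S ^ (a + 1) * (n ^ (b * (a + 1)) * n ^ ((a + 1) + (b + 1))) := by
        rw [mul_pow, ← pow_mul]; ring
    _ ≤ H * (n ^ (b + 1)) ^ a * (n ^ (b * (a + 1)) * n ^ ((a + 1) + (b + 1))) := by
        apply mul_le_mul_of_nonneg_right h2 (by positivity)
    _ = H * (n ^ 2) ^ ((a + 1) * (b + 1)) := by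
        rw [show ((n:ℝ) ^ 2) ^ ((a + 1) * (b + 1))
            = n ^ ((b + 1) * a) * n ^ (b * (a + 1)) * n ^ (a + 1 + (b + 1)) from by
          rw [← pow_add, ← pow_add, ← pow_mul]
          congr 1
          ring]
        ring

/-- Sidorenko's conjecture for complete bipartite graphs:
`t_{K_{s,t}}(G) ≥ t_{K₂}(G)^{st}`. -/
theorem stmt12 {B : Type*} [Fintype B] [Nonempty B]
    (s t : ℕ) (hs : 0 < s) (ht : 0 < t) (G : SimpleGraph B) :
    (2 * (G.edgeFinset.card : ℝ) / (Fintype.card B : ℝ) ^ 2) ^ (s * t) ≤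
      (homCount (completeBipartiteGraph (Fin s) (Fin t)) G : ℝ) /
        (Fintype.card B : ℝ) ^ (s + t) := by
  classical
  obtain ⟨a, rfl⟩ : ∃ a, s = a + 1 := ⟨s - 1, (Nat.succ_pred_eq_of_pos hs).symm⟩
  obtain ⟨b, rfl⟩ : ∃ b, t = b + 1 := ⟨t - 1, (Nat.succ_pred_eq_of_pos ht).symm⟩
  have hn0 : (0:ℝ) < (Fintype.card B : ℝ) := by
    exact_mod_cast Fintype.card_pos
  have hsum : (∑ y : Fin (b + 1) → B,
        ((Finset.univ.filter (fun v => ∀ j, G.Adj v (y j))).card : ℝ))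
      = ∑ v : B, (G.degree v : ℝ) ^ (b + 1) := by
    rw [← Nat.cast_sum, sum_card_eq, Nat.cast_sum]
    push_cast
    rfl
  have hhom : (homCount (completeBipartiteGraph (Fin (a + 1)) (Fin (b + 1))) G : ℝ)
      = ∑ y : Fin (b + 1) → B,
          ((Finset.univ.filter (fun v => ∀ j, G.Adj v (y j))).card : ℝ) ^ (a + 1) := by
    rw [homCount_eq, Nat.cast_sum]
    push_cast
    rfl
  have h1 : (2 * (G.edgeFinset.card : ℝ)) ^ (b + 1) / (Fintype.card B : ℝ) ^ b
      ≤ ∑ v : B, (G.degree v : ℝ) ^ (b + 1) := by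
    have h := pow_sum_div_card_le_sum_pow (f := fun v : B => (G.degree v : ℝ))
      (s := Finset.univ) (fun i _ => by positivity) b
    rw [Finset.card_univ] at h
    have hd : (∑ v : B, (G.degree v : ℝ)) = 2 * (G.edgeFinset.card : ℝ) := by
      rw [← Nat.cast_sum, SimpleGraph.sum_degrees_eq_twice_card_edges]
      push_cast; ring
    rwa [hd] at h
  have h2 : (∑ v : B, (G.degree v : ℝ) ^ (b + 1)) ^ (a + 1)
        / ((Fintype.card B : ℝ) ^ (b + 1)) ^ a
      ≤ (homCount (completeBipartiteGraph (Fin (a + 1)) (Fin (b + 1))) G : ℝ) := by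
    have h := pow_sum_div_card_le_sum_pow
      (f := fun y : Fin (b + 1) → B =>
        ((Finset.univ.filter (fun v => ∀ j, G.Adj v (y j))).card : ℝ))
      (s := Finset.univ) (fun i _ => by positivity) a
    rw [Finset.card_univ] at h
    have hcf : ((Fintype.card (Fin (b + 1) → B) : ℝ)) = (Fintype.card B : ℝ) ^ (b + 1) := by
      simp [Fintype.card_fun]
    rw [hcf, hsum] at h
    rw [hhom]
    exact h
  exact sidor_arith a b _ _ _ _ hn0 (by positivity)
    (Finset.sum_nonneg fun v _ => by positivity) (Nat.cast_nonneg _) h1 h2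
end

section
/- Sidorenko's conjecture holds for trees of depth at most 2 (spiders): if H is a bipartite graph obtained by taking a root vertex u joined to vertices v₁,...,v_t, and attaching arbitrary sets of leaves to each vᵢ, with m edges total, then t_H(G) ≥ t_{K₂}(G)^m for every graph G. -/
/-!
Write `d` for the degree function of `G`, `D = ∑ d = 2 e(G)`, `n = |V(G)|` and
`Q x = ∏ᵢ ∑_{y ∼ x} d(y) ^ Lᵢ`, so that `hom(H, G) = ∑ₓ Q x`. Jensen's inequality for `log` over
the neighbourhood of `x` gives
`d(x) log (Q x / d(x)) ≥ (t - 1) d(x) log d(x) + (∑ Lᵢ) ∑_{y ∼ x} log d(y)`,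
and since `∑ₓ ∑_{y ∼ x} log d(y) = ∑_y d(y) log d(y)` the sum over `x` of the right-hand sides is
`(m - 1) ∑ d log d`. The log-sum inequality with weights `d(x)` bounds the sum of the left-hand
sides by `D log (∑ Q / D)`, and convexity of `x log x` gives `∑ d log d ≥ D log (D / n)`.
Hence `∑ Q ≥ D (D / n) ^ (m - 1)`, which is the claim.
-/

open Finset
open scoped Classical

/-- The spider (depth-2 tree): a root `none`, joined to vertices
`some (.inl i)` for `i : Fin t`, with `L i` leaves `some (.inr ⟨i, j⟩)`
attached to the `i`-th such vertex. -/
def spider (t : ℕ) (L : Fin t → ℕ) :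
    SimpleGraph (Option (Fin t ⊕ Σ i : Fin t, Fin (L i))) :=
  SimpleGraph.fromRel (fun x y =>
    (x = none ∧ ∃ i, y = some (Sum.inl i)) ∨
    (∃ i j, x = some (Sum.inl i) ∧ y = some (Sum.inr ⟨i, j⟩)))

namespace Real

theorem sum_mul_log_div_le {ι : Type*} (s : Finset ι) {w v : ι → ℝ}
    (hw : ∀ i ∈ s, 0 < w i) (hv : ∀ i ∈ s, 0 < v i) :
    ∑ i ∈ s, w i * log (v i / w i) ≤
      (∑ i ∈ s, w i) * log ((∑ i ∈ s, v i) / ∑ i ∈ s, w i) := by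
  rcases s.eq_empty_or_nonempty with rfl | hs
  · simp
  set W := ∑ i ∈ s, w i
  have hW : 0 < W := sum_pos hw hs
  have jensen := strictConcaveOn_log_Ioi.concaveOn.le_map_sum (t := s)
    (w := fun i => w i / W) (p := fun i => v i / w i)
    (fun i hi => (div_pos (hw i hi) hW).le) (by rw [← sum_div, div_self hW.ne'])
    (fun i hi => div_pos (hv i hi) (hw i hi))
  have hmean : ∑ i ∈ s, (w i / W) • (v i / w i) = (∑ i ∈ s, v i) / W := by
    rw [sum_div]
    refine sum_congr rfl fun i hi => ?_
    have := (hw i hi).ne'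
    rw [smul_eq_mul]
    field_simp
  rw [hmean] at jensen
  simp only [smul_eq_mul, div_mul_eq_mul_div, ← sum_div] at jensen
  rwa [div_le_iff₀' hW] at jensen

theorem sum_mul_log_div_card_le {ι : Type*} (s : Finset ι) {p : ι → ℝ}
    (hp : ∀ i ∈ s, 0 ≤ p i) :
    (∑ i ∈ s, p i) * log ((∑ i ∈ s, p i) / #s) ≤ ∑ i ∈ s, p i * log (p i) := by
  rcases s.eq_empty_or_nonempty with rfl | hs
  · simp
  have hs' : (0 : ℝ) < #s := by exact_mod_cast hs.card_pos
  have jensen := convexOn_mul_log.map_sum_le (t := s) (w := fun _ => 1 / (#s : ℝ)) (p := p)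
    (fun _ _ => by positivity) (by simp [hs'.ne']) hp
  simp only [smul_eq_mul, one_div_mul_eq_div, ← sum_div] at jensen
  rw [div_mul_eq_mul_div] at jensen
  rwa [div_le_div_iff_of_pos_right hs'] at jensen

end Real

namespace SimpleGraph

open Real

variable {V : Type*} [Fintype V] (G : SimpleGraph V) [DecidableRel G.Adj]

theorem sum_sum_neighborFinset {M : Type*} [AddCommMonoid M] (f : V → M) :
    ∑ x, ∑ y ∈ G.neighborFinset x, f y = ∑ y, G.degree y • f y := by
  rw [sum_comm' (t' := univ) (s' := fun y => G.neighborFinset y) fun x y => by simp [adj_comm]]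
  simp [card_neighborFinset_eq_degree]

theorem degree_pos_of_mem_neighborFinset {x y : V} (h : y ∈ G.neighborFinset x) :
    0 < G.degree y :=
  (G.degree_pos_iff_exists_adj y).2 ⟨x, ((G.mem_neighborFinset x y).1 h).symm⟩

theorem mul_sum_log_degree_le (x : V) (ℓ : ℕ) :
    ℓ * ∑ y ∈ G.neighborFinset x, log (G.degree y) ≤
      G.degree x * log ((∑ y ∈ G.neighborFinset x, (G.degree y : ℝ) ^ ℓ) / G.degree x) := by
  have := sum_mul_log_div_le (G.neighborFinset x) (w := fun _ => 1)
    (v := fun y => (G.degree y : ℝ) ^ ℓ) (fun _ _ => one_pos)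
    (fun y hy => pow_pos (by exact_mod_cast G.degree_pos_of_mem_neighborFinset hy) ℓ)
  simpa [log_pow, mul_sum, card_neighborFinset_eq_degree] using this

theorem sum_degree_pow_pos {x : V} (hx : 0 < G.degree x) (ℓ : ℕ) :
    0 < ∑ y ∈ G.neighborFinset x, (G.degree y : ℝ) ^ ℓ :=
  sum_pos (fun y hy => pow_pos (by exact_mod_cast G.degree_pos_of_mem_neighborFinset hy) ℓ)
    (card_pos.1 (by rwa [card_neighborFinset_eq_degree]))

theorem prod_sum_degree_pow_pos {ι : Type*} [Fintype ι] (L : ι → ℕ) {x : V}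
    (hx : 0 < G.degree x) :
    0 < ∏ i, ∑ y ∈ G.neighborFinset x, (G.degree y : ℝ) ^ L i :=
  prod_pos fun i _ => G.sum_degree_pow_pos hx (L i)

theorem le_degree_mul_log_prod_div_degree {ι : Type*} [Fintype ι] (L : ι → ℕ) {x : V}
    (hx : 0 < G.degree x) :
    (Fintype.card ι - 1 : ℝ) * (G.degree x * log (G.degree x)) +
        (∑ i, L i : ℕ) * ∑ y ∈ G.neighborFinset x, log (G.degree y) ≤
      G.degree x * log ((∏ i, ∑ y ∈ G.neighborFinset x, (G.degree y : ℝ) ^ L i) / G.degree x) := by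
  have hd : (0 : ℝ) < G.degree x := by exact_mod_cast hx
  have hS i := G.sum_degree_pow_pos hx (L i)
  have hsum := sum_le_sum fun i (_ : i ∈ univ) => G.mul_sum_log_degree_le x (L i)
  rw [log_div (G.prod_sum_degree_pow_pos L hx).ne' hd.ne', log_prod fun i _ => (hS i).ne']
  simp only [← sum_mul, ← mul_sum, log_div (hS _).ne' hd.ne', sum_sub_distrib, sum_const,
    card_univ, nsmul_eq_mul] at hsum
  push_cast
  linarith

theorem pred_mul_sum_degree_mul_log_le {ι : Type*} [Fintype ι] (L : ι → ℕ) :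
    (Fintype.card ι + ∑ i, L i - 1 : ℝ) * ∑ x, G.degree x * log (G.degree x) ≤
      (∑ x, (G.degree x : ℝ)) * log ((∑ x with 0 < G.degree x,
        ∏ i, ∑ y ∈ G.neighborFinset x, (G.degree y : ℝ) ^ L i) / ∑ x, (G.degree x : ℝ)) := by
  have hsupp {f : V → ℝ} (hf : ∀ x, G.degree x = 0 → f x = 0) :
      ∑ x with 0 < G.degree x, f x = ∑ x, f x :=
    sum_filter_of_ne fun x _ hfx => Nat.pos_of_ne_zero fun h => hfx (hf x h)
  have hempty {x : V} (h : G.degree x = 0) : G.neighborFinset x = ∅ := by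
    rwa [← card_eq_zero, card_neighborFinset_eq_degree]
  have logsum := sum_mul_log_div_le {x | 0 < G.degree x} (w := fun x => (G.degree x : ℝ))
    (fun x hx => by simpa using hx) (fun x hx => G.prod_sum_degree_pow_pos L (by simpa using hx))
  rw [hsupp (f := fun x => (G.degree x : ℝ)) fun x h => by simp [h]] at logsum
  refine le_trans ?_ logsum
  calc (Fintype.card ι + ∑ i, L i - 1 : ℝ) * ∑ x, G.degree x * log (G.degree x)
      = ∑ x, ((Fintype.card ι - 1 : ℝ) * (G.degree x * log (G.degree x)) +
          (∑ i, L i : ℕ) * ∑ y ∈ G.neighborFinset x, log (G.degree y)) := by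
        rw [sum_add_distrib, ← mul_sum, ← mul_sum, G.sum_sum_neighborFinset]
        simp only [nsmul_eq_mul]
        push_cast
        ring
    _ = ∑ x with 0 < G.degree x, ((Fintype.card ι - 1 : ℝ) * (G.degree x * log (G.degree x)) +
          (∑ i, L i : ℕ) * ∑ y ∈ G.neighborFinset x, log (G.degree y)) :=
        (hsupp fun x h => by simp [h, hempty h]).symm
    _ ≤ _ := sum_le_sum fun x hx =>
        G.le_degree_mul_log_prod_div_degree L (by simpa using hx)

theorem sum_degree_pow_mul_card_le [Nonempty V] {ι : Type*} [Fintype ι] (L : ι → ℕ) :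
    (∑ x, (G.degree x : ℝ)) ^ (Fintype.card ι + ∑ i, L i) * Fintype.card V ≤
      Fintype.card V ^ (Fintype.card ι + ∑ i, L i) *
        ∑ x, ∏ i, ∑ y ∈ G.neighborFinset x, (G.degree y : ℝ) ^ L i := by
  set D := ∑ x, (G.degree x : ℝ)
  set n := (Fintype.card V : ℝ)
  set Q := fun x => ∏ i, ∑ y ∈ G.neighborFinset x, (G.degree y : ℝ) ^ L i
  have hn : 0 < n := by positivity
  have hQ x : 0 ≤ Q x := prod_nonneg fun _ _ => sum_nonneg fun _ _ => by positivity
  cases isEmpty_or_nonempty ι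
  · simp [Q, n]
  obtain ⟨k, hk⟩ : ∃ k, Fintype.card ι + ∑ i, L i = k + 1 :=
    Nat.exists_eq_add_one.2 (Nat.add_pos_left Fintype.card_pos _)
  have hD0 : 0 ≤ D := sum_nonneg fun x _ => Nat.cast_nonneg _
  rcases hD0.eq_or_lt with hD | hD
  · rw [hk, ← hD, zero_pow k.succ_ne_zero, zero_mul]
    exact mul_nonneg (by positivity) (sum_nonneg fun x _ => hQ x)
  set N' := ∑ x with 0 < G.degree x, Q x
  have hN' : 0 < N' := by
    obtain ⟨x, hx⟩ : ∃ x, 0 < G.degree x := by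
      by_contra! h
      simp [D, fun x => Nat.le_zero.1 (h x)] at hD
    exact (G.prod_sum_degree_pow_pos L hx).trans_le
      (single_le_sum (fun x _ => hQ x) (mem_filter.2 ⟨mem_univ x, hx⟩))
  have hlog : k * log (D / n) ≤ log (N' / D) := by
    refine le_of_mul_le_mul_left ?_ hD
    calc D * (k * log (D / n)) = k * (D * log (D / n)) := by ring
      _ ≤ k * ∑ x, G.degree x * log (G.degree x) := by
        gcongr
        simpa using sum_mul_log_div_card_le univ fun x _ => (G.degree x).cast_nonneg
      _ ≤ D * log (N' / D) := by
        have hk' : (Fintype.card ι + ∑ i, L i - 1 : ℝ) = k := by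
          rw [← Nat.cast_add, hk]
          simp
        exact hk' ▸ G.pred_mul_sum_degree_mul_log_le L
  have hpow : (D / n) ^ k ≤ N' / D := by
    rwa [← log_le_log_iff (by positivity) (by positivity), log_pow]
  have hN'N : N' ≤ ∑ x, Q x := sum_le_sum_of_subset_of_nonneg (filter_subset _ _) fun x _ _ => hQ x
  rw [div_pow, div_le_div_iff₀ (by positivity) hD] at hpow
  calc D ^ (Fintype.card ι + ∑ i, L i) * n = D ^ k * D * n := by rw [hk, pow_succ]
    _ ≤ N' * n ^ k * n := by gcongr
    _ ≤ (∑ x, Q x) * n ^ k * n := by gcongr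
    _ = n ^ (Fintype.card ι + ∑ i, L i) * ∑ x, Q x := by rw [hk, pow_succ]; ring

end SimpleGraph

section Spider

variable {t : ℕ} {L : Fin t → ℕ}

theorem spider_adj_root (i : Fin t) : (spider t L).Adj none (some (.inl i)) := by
  simp [spider]

theorem spider_adj_leaf (i : Fin t) (j : Fin (L i)) :
    (spider t L).Adj (some (.inl i)) (some (.inr ⟨i, j⟩)) := by
  simp [spider]

def spiderEdge : Fin t ⊕ (Σ i, Fin (L i)) → Sym2 (Option (Fin t ⊕ Σ i, Fin (L i)))
  | .inl i => s(none, some (.inl i))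
  | .inr ⟨i, j⟩ => s(some (.inl i), some (.inr ⟨i, j⟩))

theorem card_edgeFinset_spider : #(spider t L).edgeFinset = t + ∑ i, L i := by
  calc #(spider t L).edgeFinset = #(univ : Finset (Fin t ⊕ Σ i, Fin (L i))) := by
        refine (card_bij (fun a _ => spiderEdge a) ?_ ?_ ?_).symm
        · rintro (i | ⟨i, j⟩) -
          · exact SimpleGraph.mem_edgeFinset.2 (spider_adj_root i)
          · exact SimpleGraph.mem_edgeFinset.2 (spider_adj_leaf i j)
        · rintro (i | ⟨i, j⟩) - (i' | ⟨i', j'⟩) - h <;> simp_all [spiderEdge]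
        · intro e he
          induction e using Sym2.ind with | _ x y => ?_
          rw [SimpleGraph.mem_edgeFinset, SimpleGraph.mem_edgeSet, spider,
            SimpleGraph.fromRel_adj] at he
          obtain ⟨-, (⟨rfl, i, rfl⟩ | ⟨i, j, rfl, rfl⟩) | (⟨rfl, i, rfl⟩ | ⟨i, j, rfl, rfl⟩)⟩ := he
          · exact ⟨.inl i, mem_univ _, rfl⟩
          · exact ⟨.inr ⟨i, j⟩, mem_univ _, rfl⟩
          · exact ⟨.inl i, mem_univ _, Sym2.eq_swap⟩
          · exact ⟨.inr ⟨i, j⟩, mem_univ _, Sym2.eq_swap⟩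
    _ = t + ∑ i, L i := by simp

variable {B : Type*} [Fintype B] (G : SimpleGraph B) [DecidableRel G.Adj]

def spiderHomEquiv :
    {f : Option (Fin t ⊕ Σ i, Fin (L i)) → B // ∀ a b, (spider t L).Adj a b → G.Adj (f a) (f b)} ≃
      (x : B) × Π i, (y : G.neighborFinset x) × (Fin (L i) → G.neighborFinset y) where
  toFun f := ⟨f.1 none, fun i =>
    ⟨⟨f.1 (some (.inl i)), (G.mem_neighborFinset _ _).2 (f.2 _ _ (spider_adj_root i))⟩,
      fun j => ⟨f.1 (some (.inr ⟨i, j⟩)), (G.mem_neighborFinset _ _).2 (f.2 _ _ (spider_adj_leaf i j))⟩⟩⟩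
  invFun p := ⟨fun
      | none => p.1
      | some (.inl i) => (p.2 i).1
      | some (.inr ⟨i, j⟩) => (p.2 i).2 j, by
    rintro a b ⟨-, hab⟩
    rcases hab with (⟨rfl, i, rfl⟩ | ⟨i, j, rfl, rfl⟩) | (⟨rfl, i, rfl⟩ | ⟨i, j, rfl, rfl⟩)
    · exact (G.mem_neighborFinset _ _).1 (p.2 i).1.2
    · exact (G.mem_neighborFinset _ _).1 ((p.2 i).2 j).2
    · exact ((G.mem_neighborFinset _ _).1 (p.2 i).1.2).symm
    · exact ((G.mem_neighborFinset _ _).1 ((p.2 i).2 j).2).symm⟩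
  left_inv f := Subtype.ext <| funext fun | none => rfl | some (.inl _) => rfl | some (.inr _) => rfl
  right_inv _ := rfl

theorem homCount_spider :
    homCount (spider t L) G = ∑ x, ∏ i, ∑ y ∈ G.neighborFinset x, G.degree y ^ L i := by
  have hsub : homCount (spider t L) G = Fintype.card {f : Option (Fin t ⊕ Σ i, Fin (L i)) → B //
      ∀ a b, (spider t L).Adj a b → G.Adj (f a) (f b)} := by
    unfold homCount
    convert (Fintype.card_subtype _).symm
  rw [hsub, Fintype.card_congr (spiderHomEquiv G), Fintype.card_sigma]
  refine sum_congr rfl fun x _ => ?_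
  rw [Fintype.card_pi]
  refine prod_congr rfl fun i _ => ?_
  rw [Fintype.card_sigma, ← sum_coe_sort (G.neighborFinset x)]
  simp only [Fintype.card_fun, Fintype.card_coe, Fintype.card_fin,
    SimpleGraph.card_neighborFinset_eq_degree]

end Spider

/-- Sidorenko's conjecture for trees of depth at most 2
(spiders): `t_H(G) ≥ t_{K₂}(G)^m` where `m` is the number of edges. -/
theorem stmt13 {B : Type*} [Fintype B] [Nonempty B]
    (t : ℕ) (L : Fin t → ℕ) (m : ℕ) (hm : (spider t L).edgeFinset.card = m)
    (G : SimpleGraph B) :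
    (2 * (G.edgeFinset.card : ℝ) / (Fintype.card B : ℝ) ^ 2) ^ m ≤
      (homCount (spider t L) G : ℝ) /
        (Fintype.card B : ℝ) ^ (Fintype.card (Option (Fin t ⊕ Σ i : Fin t, Fin (L i)))) := by
  have hedges : Fintype.card (Fin t) + ∑ i, L i = m := by
    rw [← hm, card_edgeFinset_spider, Fintype.card_fin]
  have hvertices : Fintype.card (Option (Fin t ⊕ Σ i : Fin t, Fin (L i))) = m + 1 := by
    simp [← hedges]
  have hdegrees : 2 * (G.edgeFinset.card : ℝ) = ∑ x, (G.degree x : ℝ) := by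
    exact_mod_cast G.sum_degrees_eq_twice_card_edges.symm
  have key := G.sum_degree_pow_mul_card_le L
  rw [hedges] at key
  rw [hvertices, hdegrees, homCount_spider, div_pow, ← pow_mul,
    div_le_div_iff₀ (by positivity) (by positivity)]
  push_cast
  set n := (Fintype.card B : ℝ)
  set N := ∑ x, ∏ i, ∑ y ∈ G.neighborFinset x, (G.degree y : ℝ) ^ L i
  calc (∑ x, (G.degree x : ℝ)) ^ m * n ^ (m + 1)
      = ((∑ x, (G.degree x : ℝ)) ^ m * n) * n ^ m := by ring
    _ ≤ (n ^ m * N) * n ^ m := by gcongr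
    _ = N * n ^ (2 * m) := by ring
end

section
/- Let G be a graph on N vertices and fix reals p ∈ (0,1] and an integer n ≥ 1. Suppose v is a 'good' vertex, i.e., for every 1 ≤ k ≤ n, fewer than (1/(2n))|N(v)|^k of the k-sequences of vertices in N(v) have common neighborhood of size at most (2n)^{-n-1} p^k N. Let H = (V₁,V₂,E) be bipartite with n vertices, a vertex u ∈ V₁ complete to V₂, and let each w ∈ V₁ \ {u} have degree d(w) ≤ n. Then the number of homomorphisms f from H to G with f(u) = v is at least (1/2)|N(v)|^{|V₂|} · Π_{w ∈ V₁, w≠u} (2n)^{-n-1} p^{d(w)} N. -/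
/-!
Maps `V₂ → N(v)` are encoded as maps `A → B` that are constantly `v` off `V₂`; there are
`|N(v)|^|V₂|` of them. Call such a map `g` good if for every `w ∈ V₁ \ {u}` the common
neighbourhood of `g(N_H(w))` has more than `(2n)^{-n-1} p^{d(w)} N` vertices. Since `v` is good and
`d(w) ≤ n`, for each `w` fewer than a `1/(2n)` fraction of the maps fail at `w` (when `d(w) = 0`
the common neighbourhood is all of `G`), so a union bound over the at most `n - 1` vertices `w`
leaves at least half of the maps good. A good `g` extends to a homomorphism by sending each
`w ∈ V₁ \ {u}` anywhere into its common neighbourhood, and `g` can be read off the extension.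
-/

open Finset
open scoped Classical

section Counting

variable {ι β : Type*} [Fintype ι]

lemma mem_piFinset_ite_singleton {s : Finset ι} {t : ι → Finset β} {c g : ι → β} :
    g ∈ (Fintype.piFinset fun a => if a ∈ s then t a else {c a}) ↔
      (∀ a ∈ s, g a ∈ t a) ∧ ∀ a ∉ s, g a = c a := by
  simp only [Fintype.mem_piFinset]
  refine ⟨fun h => ⟨fun a ha => ?_, fun a ha => ?_⟩, fun h a => ?_⟩
  · simpa [ha] using h a
  · simpa [ha] using h a
  · by_cases ha : a ∈ s <;> simp [ha, h.1, h.2]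

lemma card_piFinset_ite_singleton (s : Finset ι) (t : ι → Finset β) (c : ι → β) :
    #(Fintype.piFinset fun a => if a ∈ s then t a else {c a}) = ∏ a ∈ s, #(t a) := by
  simp only [Fintype.card_piFinset, apply_ite Finset.card, card_singleton, Fintype.prod_ite_mem]

lemma card_le_card_add_sum_card {α κ : Type*} [DecidableEq α] {s t : Finset α} {I : Finset κ}
    {b : κ → Finset α} (h : s ⊆ t ∪ I.biUnion b) : #s ≤ #t + ∑ i ∈ I, #(b i) :=
  (card_le_card h).trans <| (card_union_le _ _).trans (Nat.add_le_add_left card_biUnion_le _)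

noncomputable def mapsInto (s : Finset ι) (X : Finset β) (c : β) : Finset (ι → β) :=
  Fintype.piFinset fun a => if a ∈ s then X else {c}

lemma mem_mapsInto {s : Finset ι} {X : Finset β} {c : β} {g : ι → β} :
    g ∈ mapsInto s X c ↔ (∀ a ∈ s, g a ∈ X) ∧ ∀ a ∉ s, g a = c :=
  mem_piFinset_ite_singleton

lemma card_mapsInto (s : Finset ι) (X : Finset β) (c : β) : #(mapsInto s X c) = #X ^ #s := by
  rw [mapsInto, card_piFinset_ite_singleton, prod_const]

/-- A map in `mapsInto T X c` is determined by its restriction to `s` and its values on `T \ s`. -/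
lemma card_filter_mapsInto_le [Fintype β] {s T : Finset ι} (hsT : s ⊆ T) (X : Finset β) (c : β)
    (P : (Fin #s → β) → Prop) :
    #{g ∈ mapsInto T X c | P fun i => g (s.equivFin.symm i)} ≤
      #{S : Fin #s → β | (∀ i, S i ∈ X) ∧ P S} * #X ^ (#T - #s) := by
  rw [← card_sdiff_of_subset hsT, ← card_mapsInto (T \ s) X c, ← card_product]
  refine card_le_card_of_injOn
    (fun g => (fun i => g (s.equivFin.symm i), fun a => if a ∈ T \ s then g a else c))
    (fun g hg => ?_) (fun g hg g' hg' hgg' => ?_)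
  · obtain ⟨hgT, hP⟩ := mem_filter.1 hg
    rw [mem_mapsInto] at hgT
    refine mem_product.2
      ⟨mem_filter.2 ⟨mem_univ _, fun i => hgT.1 _ (hsT (s.equivFin.symm i).2), hP⟩,
        mem_mapsInto.2 ⟨fun a ha => by simp [ha, hgT.1 a (mem_sdiff.1 ha).1],
          fun a ha => by simp [ha]⟩⟩
  · obtain ⟨hs, hrest⟩ := Prod.ext_iff.1 hgg'
    have hgT := (mem_mapsInto.1 (mem_filter.1 hg).1).2
    have hgT' := (mem_mapsInto.1 (mem_filter.1 hg').1).2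
    funext a
    by_cases has : a ∈ s
    · simpa using congrFun hs (s.equivFin ⟨a, has⟩)
    by_cases haT : a ∈ T
    · simpa [haT, has] using congrFun hrest a
    · rw [hgT a haT, hgT' a haT]

end Counting

section Graphs

variable {A B : Type*} [Fintype A] [Fintype B] (G : SimpleGraph B) (H : SimpleGraph A)

noncomputable def commonNbhd (g : A → B) (s : Finset A) : Finset B :=
  univ.filter fun x => ∀ a ∈ s, G.Adj (g a) x

def IsGoodVertex (N n : ℕ) (p : ℝ) (v : B) : Prop :=
  ∀ k, 1 ≤ k → k ≤ n →
    (#{S : Fin k → B | (∀ i, S i ∈ G.neighborFinset v) ∧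
        (#{x | ∀ i, G.Adj (S i) x} : ℝ) ≤ p ^ k * N / (2 * n) ^ (n + 1)} : ℝ) <
      1 / (2 * n) * (G.degree v : ℝ) ^ k

lemma card_filter_card_commonNbhd_le {s T : Finset A} (hsT : s ⊆ T) (X : Finset B) (c : B)
    (θ ε : ℝ)
    (h : (#{S : Fin #s → B | (∀ i, S i ∈ X) ∧ (#{x | ∀ i, G.Adj (S i) x} : ℝ) ≤ θ} : ℝ) ≤
      ε * #X ^ #s) :
    (#{g ∈ mapsInto T X c | (#(commonNbhd G g s) : ℝ) ≤ θ} : ℝ) ≤ ε * #X ^ #T := by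
  have hcommon : ∀ g : A → B,
      commonNbhd G g s = univ.filter fun x => ∀ i, G.Adj (g (s.equivFin.symm i)) x := by
    intro g
    ext x
    simp only [commonNbhd, mem_filter, mem_univ, true_and]
    exact ⟨fun hx i => hx _ (s.equivFin.symm i).2,
      fun hx a ha => by simpa using hx (s.equivFin ⟨a, ha⟩)⟩
  simp only [hcommon]
  calc _ ≤ (#{S : Fin #s → B | (∀ i, S i ∈ X) ∧ (#{x | ∀ i, G.Adj (S i) x} : ℝ) ≤ θ} : ℝ) *
        #X ^ (#T - #s) := by
          exact_mod_cast card_filter_mapsInto_le hsT X c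
            fun S => (#{x | ∀ i, G.Adj (S i) x} : ℝ) ≤ θ
    _ ≤ ε * #X ^ #s * #X ^ (#T - #s) := by gcongr
    _ = ε * #X ^ #T := by rw [mul_assoc, ← pow_add, Nat.add_sub_cancel' (card_le_card hsT)]

lemma card_filter_card_commonNbhd_le_of_isGoodVertex {N n : ℕ} {p : ℝ} {v : B}
    (hN : Fintype.card B = N) (hn : 1 ≤ n) (hgood : IsGoodVertex G N n p v)
    {s T : Finset A} (hsT : s ⊆ T) (hs : #s ≤ n) :
    (#{g ∈ mapsInto T (G.neighborFinset v) v |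
        (#(commonNbhd G g s) : ℝ) ≤ p ^ #s * N / (2 * n) ^ (n + 1)} : ℝ) ≤
      1 / (2 * n) * G.degree v ^ #T := by
  rcases s.eq_empty_or_nonempty with rfl | hs0
  · have hN0 : (0 : ℝ) < N := by exact_mod_cast hN ▸ Fintype.card_pos_iff.2 ⟨v⟩
    have hpow : (1 : ℝ) < (2 * n) ^ (n + 1) :=
      one_lt_pow₀ (by linarith [show (1 : ℝ) ≤ n by exact_mod_cast hn]) (by omega)
    have hempty : ∀ g : A → B,
        ¬ (#(commonNbhd G g ∅) : ℝ) ≤ p ^ #(∅ : Finset A) * N / (2 * n) ^ (n + 1) := by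
      intro g
      rw [card_empty, pow_zero, one_mul, not_le, div_lt_iff₀ (by linarith)]
      simp only [commonNbhd, notMem_empty, IsEmpty.forall_iff, implies_true, filter_true, card_univ,
        hN]
      nlinarith
    rw [filter_false_of_mem fun g _ => hempty g, card_empty, Nat.cast_zero]
    positivity
  · apply card_filter_card_commonNbhd_le G hsT
    rw [G.card_neighborFinset_eq_degree]
    exact (hgood #s hs0.card_pos hs).le

variable {G H} {V1 V2 : Finset A}

lemma neighborFinset_subset_of_bipartite (hdisj : Disjoint V1 V2)
    (hbip : ∀ a b, H.Adj a b → (a ∈ V1 ∧ b ∈ V2) ∨ (a ∈ V2 ∧ b ∈ V1)) {w : A} (hw : w ∈ V1) :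
    H.neighborFinset w ⊆ V2 := fun b hb => by
  rcases hbip w b ((H.mem_neighborFinset w b).1 hb) with ⟨-, hb⟩ | ⟨hw', -⟩
  · exact hb
  · exact absurd hw' (disjoint_left.1 hdisj hw)

lemma isHom_of_mem_piFinset_commonNbhd {v : B} {u : A} (hdisj : Disjoint V1 V2)
    (hbip : ∀ a b, H.Adj a b → (a ∈ V1 ∧ b ∈ V2) ∨ (a ∈ V2 ∧ b ∈ V1)) (hu : u ∈ V1)
    {g f : A → B} (hg : g ∈ mapsInto V2 (G.neighborFinset v) v)
    (hf : f ∈ Fintype.piFinset fun a =>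
      if a ∈ V1.erase u then commonNbhd G g (H.neighborFinset a) else {g a}) :
    f u = v ∧ ∀ a b, H.Adj a b → G.Adj (f a) (f b) := by
  rw [mem_mapsInto] at hg
  rw [mem_piFinset_ite_singleton] at hf
  have hfu : f u = v := (hf.2 u (notMem_erase u V1)).trans (hg.2 u (disjoint_left.1 hdisj hu))
  have hV2 : ∀ b ∈ V2, f b = g b := fun b hb =>
    hf.2 b fun hb' => disjoint_left.1 hdisj (mem_of_mem_erase hb') hb
  have hadj : ∀ a ∈ V1, ∀ b ∈ V2, H.Adj a b → G.Adj (f a) (f b) := by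
    intro a ha b hb hab
    rw [hV2 b hb]
    by_cases hau : a = u
    · rw [hau, hfu, ← G.mem_neighborFinset]
      exact hg.1 b hb
    · have hfa := hf.1 a (mem_erase.2 ⟨hau, ha⟩)
      simp only [commonNbhd, mem_filter, mem_univ, true_and] at hfa
      exact (hfa b ((H.mem_neighborFinset a b).2 hab)).symm
  refine ⟨hfu, fun a b hab => ?_⟩
  rcases hbip a b hab with ⟨ha, hb⟩ | ⟨ha, hb⟩
  · exact hadj a ha b hb hab
  · exact (hadj b hb a ha hab.symm).symm

/-- Distinct `g` have disjoint sets of extensions, since `g` is recovered from `f` by resetting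
`V₁ \ {u}` to `v`. -/
lemma sum_prod_card_commonNbhd_le_card_homs {v : B} {u : A} (hdisj : Disjoint V1 V2)
    (hbip : ∀ a b, H.Adj a b → (a ∈ V1 ∧ b ∈ V2) ∨ (a ∈ V2 ∧ b ∈ V1)) (hu : u ∈ V1)
    {S : Finset (A → B)} (hS : S ⊆ mapsInto V2 (G.neighborFinset v) v) :
    ∑ g ∈ S, ∏ w ∈ V1.erase u, #(commonNbhd G g (H.neighborFinset w)) ≤
      #{f : A → B | f u = v ∧ ∀ a b, H.Adj a b → G.Adj (f a) (f b)} := by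
  set homs : Finset (A → B) := {f | f u = v ∧ ∀ a b, H.Adj a b → G.Adj (f a) (f b)}
  set reset : (A → B) → A → B := fun f a => if a ∈ V1.erase u then v else f a
  have hext : ∀ g ∈ S, (Fintype.piFinset fun a =>
      if a ∈ V1.erase u then commonNbhd G g (H.neighborFinset a) else {g a}) ⊆
        {f ∈ homs | reset f = g} := by
    intro g hgS f hf
    have hg := hS hgS
    refine mem_filter.2
      ⟨mem_filter.2 ⟨mem_univ _, isHom_of_mem_piFinset_commonNbhd hdisj hbip hu hg hf⟩,
        funext fun a => ?_⟩
    by_cases ha : a ∈ V1.erase u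
    · simp only [reset, ha, if_true]
      exact ((mem_mapsInto.1 hg).2 a fun haV2 =>
        disjoint_left.1 hdisj (mem_of_mem_erase ha) haV2).symm
    · simp only [reset, ha, if_false]
      exact (mem_piFinset_ite_singleton.1 hf).2 a ha
  calc ∑ g ∈ S, ∏ w ∈ V1.erase u, #(commonNbhd G g (H.neighborFinset w))
      ≤ ∑ g ∈ S, #{f ∈ homs | reset f = g} := sum_le_sum fun g hg => by
        rw [← card_piFinset_ite_singleton]
        exact card_le_card (hext g hg)
    _ = #{f ∈ homs | reset f ∈ S} := sum_card_fiberwise_eq_card_filter _ _ _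
    _ ≤ #homs := card_filter_le _ _

lemma half_le_card_filter_forall_lt_card_commonNbhd {N n : ℕ} {p : ℝ} {v : B} {u : A}
    (hN : Fintype.card B = N) (hn : 1 ≤ n) (hgood : IsGoodVertex G N n p v)
    (hdisj : Disjoint V1 V2)
    (hbip : ∀ a b, H.Adj a b → (a ∈ V1 ∧ b ∈ V2) ∨ (a ∈ V2 ∧ b ∈ V1))
    (hcard : Fintype.card A = n) (hu : u ∈ V1) (hdeg : ∀ w ∈ V1.erase u, H.degree w ≤ n) :
    1 / 2 * (G.degree v : ℝ) ^ #V2 ≤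
      #{g ∈ mapsInto V2 (G.neighborFinset v) v | ∀ w ∈ V1.erase u,
        p ^ H.degree w * N / (2 * n) ^ (n + 1) < #(commonNbhd G g (H.neighborFinset w))} := by
  have hbad : ∀ w ∈ V1.erase u, (#{g ∈ mapsInto V2 (G.neighborFinset v) v |
      (#(commonNbhd G g (H.neighborFinset w)) : ℝ) ≤ p ^ H.degree w * N / (2 * n) ^ (n + 1)} : ℝ) ≤
        1 / (2 * n) * (G.degree v : ℝ) ^ #V2 := by
    intro w hw
    rw [← H.card_neighborFinset_eq_degree]
    exact card_filter_card_commonNbhd_le_of_isGoodVertex G hN hn hgood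
      (neighborFinset_subset_of_bipartite hdisj hbip (mem_of_mem_erase hw))
      ((H.card_neighborFinset_eq_degree w).trans_le (hdeg w hw))
  have hunion := card_le_card_add_sum_card (s := mapsInto V2 (G.neighborFinset v) v)
    (t := {g ∈ mapsInto V2 (G.neighborFinset v) v | ∀ w ∈ V1.erase u,
        p ^ H.degree w * N / (2 * n) ^ (n + 1) < #(commonNbhd G g (H.neighborFinset w))})
    (I := V1.erase u) (b := fun w => {g ∈ mapsInto V2 (G.neighborFinset v) v |
      #(commonNbhd G g (H.neighborFinset w)) ≤ p ^ H.degree w * N / (2 * n) ^ (n + 1)})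
    fun g hg => by
      by_cases hgood : ∀ w ∈ V1.erase u,
          p ^ H.degree w * N / (2 * n) ^ (n + 1) < #(commonNbhd G g (H.neighborFinset w))
      · exact mem_union_left _ (mem_filter.2 ⟨hg, hgood⟩)
      · push Not at hgood
        obtain ⟨w, hw, hle⟩ := hgood
        exact mem_union_right _ (mem_biUnion.2 ⟨w, hw, mem_filter.2 ⟨hg, hle⟩⟩)
  rw [card_mapsInto, G.card_neighborFinset_eq_degree] at hunion
  have hI : (#(V1.erase u) : ℝ) ≤ n - 1 := by
    have hV1 : #V1 ≤ n := hcard ▸ card_le_univ V1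
    rw [card_erase_of_mem hu, Nat.cast_sub (card_pos.2 ⟨u, hu⟩)]
    push_cast
    linarith [show (#V1 : ℝ) ≤ n by exact_mod_cast hV1]
  have hsum : ∑ w ∈ V1.erase u, (#{g ∈ mapsInto V2 (G.neighborFinset v) v |
      (#(commonNbhd G g (H.neighborFinset w)) : ℝ) ≤ p ^ H.degree w * N / (2 * n) ^ (n + 1)} : ℝ) ≤
        1 / 2 * (G.degree v : ℝ) ^ #V2 := by
    have hn0 : (0 : ℝ) < n := by exact_mod_cast hn
    calc _ ≤ ∑ _w ∈ V1.erase u, 1 / (2 * n) * (G.degree v : ℝ) ^ #V2 := sum_le_sum hbad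
      _ ≤ (n - 1) * (1 / (2 * n)) * (G.degree v : ℝ) ^ #V2 := by
        rw [sum_const, nsmul_eq_mul, ← mul_assoc]
        gcongr
      _ ≤ 1 / 2 * (G.degree v : ℝ) ^ #V2 := by
        gcongr
        rw [mul_one_div, div_le_iff₀ (by positivity)]
        linarith
  have hunionR := (Nat.cast_le (α := ℝ)).2 hunion
  push_cast at hunionR
  linarith

end Graphs

theorem stmt14_general {A B : Type*} [Fintype A] [Fintype B]
    (G : SimpleGraph B) (N n : ℕ) (p : ℝ) (hN : Fintype.card B = N)
    (hn : 1 ≤ n) (hp0 : 0 < p)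
    (v : B)
    (hgood : ∀ k, 1 ≤ k → k ≤ n →
      ((Finset.univ.filter (fun S : Fin k → B =>
          (∀ i, S i ∈ G.neighborFinset v) ∧
          (((Finset.univ.filter (fun w => ∀ i, G.Adj (S i) w)).card : ℝ) ≤
            p ^ k * N / (2 * (n : ℝ)) ^ (n + 1)))).card : ℝ) <
        (1 / (2 * (n : ℝ))) * (G.degree v : ℝ) ^ k)
    (H : SimpleGraph A) (V1 V2 : Finset A)
    (hdisj : Disjoint V1 V2)
    (hbip : ∀ a b, H.Adj a b → (a ∈ V1 ∧ b ∈ V2) ∨ (a ∈ V2 ∧ b ∈ V1))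
    (hcard : Fintype.card A = n)
    (u : A) (hu : u ∈ V1)
    (hdeg : ∀ w ∈ V1.erase u, H.degree w ≤ n) :
    (1 / 2 : ℝ) * (G.degree v : ℝ) ^ V2.card *
        ∏ w ∈ V1.erase u, (p ^ (H.degree w) * (N : ℝ) / (2 * (n : ℝ)) ^ (n + 1)) ≤
      ((Finset.univ.filter (fun f : A → B =>
          f u = v ∧ ∀ a b, H.Adj a b → G.Adj (f a) (f b))).card : ℝ) := by
  set good := {g ∈ mapsInto V2 (G.neighborFinset v) v | ∀ w ∈ V1.erase u,
    p ^ H.degree w * N / (2 * n) ^ (n + 1) < #(commonNbhd G g (H.neighborFinset w))}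
  have hthreshold : ∀ w, 0 ≤ p ^ H.degree w * N / (2 * n) ^ (n + 1) := fun w => by positivity
  calc _ ≤ #good * ∏ w ∈ V1.erase u, (p ^ H.degree w * N / (2 * n) ^ (n + 1)) := by
        gcongr
        exact half_le_card_filter_forall_lt_card_commonNbhd hN hn hgood hdisj hbip hcard hu hdeg
    _ ≤ ∑ g ∈ good, ∏ w ∈ V1.erase u, (#(commonNbhd G g (H.neighborFinset w)) : ℝ) := by
        rw [← nsmul_eq_mul, ← sum_const]
        exact sum_le_sum fun g hg =>
          prod_le_prod (fun w _ => hthreshold w) fun w hw => ((mem_filter.1 hg).2 w hw).le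
    _ ≤ _ := by
        exact_mod_cast sum_prod_card_commonNbhd_le_card_homs hdisj hbip hu (filter_subset _ _)

/-- if `v` is a good vertex of `G` and `H` is bipartite with a
vertex `u ∈ V₁` complete to `V₂` and all other vertices of `V₁` of degree at
most `n`, then the number of homomorphisms `f : H → G` with `f u = v` is at
least `(1/2)|N(v)|^{|V₂|} ∏_{w ∈ V₁ \ {u}} (2n)^{-n-1} p^{d(w)} N`. -/
theorem stmt14 {A B : Type*} [Fintype A] [Fintype B]
    (G : SimpleGraph B) (N n : ℕ) (p : ℝ) (hN : Fintype.card B = N)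
    (hn : 1 ≤ n) (hp0 : 0 < p) (hp1 : p ≤ 1)
    (v : B)
    (hgood : ∀ k, 1 ≤ k → k ≤ n →
      ((Finset.univ.filter (fun S : Fin k → B =>
          (∀ i, S i ∈ G.neighborFinset v) ∧
          (((Finset.univ.filter (fun w => ∀ i, G.Adj (S i) w)).card : ℝ) ≤
            p ^ k * N / (2 * (n : ℝ)) ^ (n + 1)))).card : ℝ) <
        (1 / (2 * (n : ℝ))) * (G.degree v : ℝ) ^ k)
    (H : SimpleGraph A) (V1 V2 : Finset A)
    (hdisj : Disjoint V1 V2) (hcover : V1 ∪ V2 = Finset.univ)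
    (hbip : ∀ a b, H.Adj a b → (a ∈ V1 ∧ b ∈ V2) ∨ (a ∈ V2 ∧ b ∈ V1))
    (hcard : Fintype.card A = n)
    (u : A) (hu : u ∈ V1) (hcomplete : ∀ b ∈ V2, H.Adj u b)
    (hdeg : ∀ w ∈ V1.erase u, H.degree w ≤ n) :
    (1 / 2 : ℝ) * (G.degree v : ℝ) ^ V2.card *
        ∏ w ∈ V1.erase u, (p ^ (H.degree w) * (N : ℝ) / (2 * (n : ℝ)) ^ (n + 1)) ≤
      ((Finset.univ.filter (fun f : A → B =>
          f u = v ∧ ∀ a b, H.Adj a b → G.Adj (f a) (f b))).card : ℝ) :=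
  stmt14_general G N n p hN hn hp0 v hgood H V1 V2 hdisj hbip hcard u hu hdeg
end
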